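/- arXiv:1404.6876 — 3 statements merged into one kernel-verified Lean document; each statement's English description precedes it below -/
import Mathlib

section
/- If x = (z, z⊥) is a decomposition of the input variable and p(y|x), p(y|z) are conditional densities, then SCẼ(Y|Z) - SCẼ(Y|X) = (1/2)∬ (p(y|x) - p(y|z))² p(x) dx dy, and in particular SCẼ(Y|Z) ≥ SCẼ(Y|X). -/
/-!
Write `u = p(y|x)` and `v = p(y|z)`, the latter viewed as a function of `(x, y)`. Expanding the
square, `∫ (u - v)² p(x) = ∫ u² p(x) - 2 ∫ u v p(x) + ∫ v² p(x)`. Integrating out `z⊥` first,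
`∫ u v p(x) = ∫ v p(x, y) = ∫ v p(z, y) = ∫ v² p(z)` and `∫ v² p(x) = ∫ v² p(z)`, so the right-hand
side collapses to `∫ u² p(x) - ∫ v² p(z)`, which is twice the difference of the two SCẼ's.
-/

open MeasureTheory

namespace MeasurableEquiv

variable {α β γ : Type*} [MeasurableSpace α] [MeasurableSpace β] [MeasurableSpace γ]

def prodRightComm : (α × β) × γ ≃ᵐ (α × γ) × β :=
  (prodAssoc.trans ((MeasurableEquiv.refl α).prodCongr prodComm)).trans prodAssoc.symm

end MeasurableEquiv

section IntegrateMiddle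

variable {α β γ : Type*} [MeasurableSpace α] [MeasurableSpace β] [MeasurableSpace γ]
  {μ : Measure α} {ν : Measure β} {ρ : Measure γ} [SFinite μ] [SFinite ν] [SFinite ρ]
  {E : Type*} [NormedAddCommGroup E] [NormedSpace ℝ E]

theorem measurePreserving_prodRightComm :
    MeasurePreserving MeasurableEquiv.prodRightComm ((μ.prod ν).prod ρ) ((μ.prod ρ).prod ν) :=
  (measurePreserving_prodAssoc μ ρ ν).symm _ |>.comp <|
    ((MeasurePreserving.id μ).prod Measure.measurePreserving_swap).comp
      (measurePreserving_prodAssoc μ ν ρ)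

theorem integral_prod_prod_eq_integral_integral_middle {F : (α × β) × γ → E}
    (hF : Integrable F ((μ.prod ν).prod ρ)) :
    ∫ a, F a ∂((μ.prod ν).prod ρ) = ∫ b, ∫ w, F ((b.1, w), b.2) ∂ν ∂(μ.prod ρ) := by
  have e := measurePreserving_prodRightComm (μ := μ) (ν := ρ) (ρ := ν)
  rw [← e.integral_comp' F]
  exact integral_prod _ (e.integrable_comp_of_integrable hF)

theorem integral_lift_mul_eq_integral_mul_integral_middle {g : α × γ → ℝ}
    {F : (α × β) × γ → ℝ} (h : Integrable (fun a => g (a.1.1, a.2) * F a) ((μ.prod ν).prod ρ)) :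
    ∫ a, g (a.1.1, a.2) * F a ∂((μ.prod ν).prod ρ)
      = ∫ b, g b * ∫ w, F ((b.1, w), b.2) ∂ν ∂(μ.prod ρ) := by
  simp only [integral_prod_prod_eq_integral_integral_middle h, integral_const_mul]

theorem MeasureTheory.AEStronglyMeasurable.integral_middle {F : (α × β) × γ → E}
    (hF : AEStronglyMeasurable F ((μ.prod ν).prod ρ)) :
    AEStronglyMeasurable (fun b => ∫ w, F ((b.1, w), b.2) ∂ν) (μ.prod ρ) :=
  (hF.comp_measurePreserving measurePreserving_prodRightComm).integral_prod_right'

theorem MeasureTheory.AEStronglyMeasurable.lift_middle {X : Type*} [TopologicalSpace X]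
    {g : α × γ → X} (hg : AEStronglyMeasurable g (μ.prod ρ)) :
    AEStronglyMeasurable (fun a => g (a.1.1, a.2)) ((μ.prod ν).prod ρ) :=
  hg.comp_fst.comp_measurePreserving measurePreserving_prodRightComm

end IntegrateMiddle

section WeightedSquares

variable {α : Type*} [MeasurableSpace α] {μ : Measure α} {f g w : α → ℝ}

theorem integrable_mul_mul_of_integrable_sq_mul (hw : ∀ᵐ a ∂μ, 0 ≤ w a)
    (hm : AEStronglyMeasurable (fun a => f a * g a * w a) μ)
    (hf : Integrable (fun a => f a ^ 2 * w a) μ) (hg : Integrable (fun a => g a ^ 2 * w a) μ) :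
    Integrable (fun a => f a * g a * w a) μ := by
  refine ((hf.add hg).div_const 2).mono' hm ?_
  filter_upwards [hw] with a ha
  rw [Real.norm_eq_abs, abs_mul, abs_mul, abs_of_nonneg ha]
  have hamgm := two_mul_le_add_sq |f a| |g a|
  simp only [Pi.add_apply, sq_abs] at hamgm ⊢
  nlinarith

theorem integral_sub_sq_mul (hf : Integrable (fun a => f a ^ 2 * w a) μ)
    (hg : Integrable (fun a => g a ^ 2 * w a) μ) (hfg : Integrable (fun a => f a * g a * w a) μ) :
    ∫ a, (f a - g a) ^ 2 * w a ∂μ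
      = ∫ a, f a ^ 2 * w a ∂μ - 2 * ∫ a, f a * g a * w a ∂μ + ∫ a, g a ^ 2 * w a ∂μ := by
  rw [← integral_const_mul, ← integral_sub hf (hfg.const_mul 2), ← integral_add _ hg]
  · exact integral_congr_ae (.of_forall fun a => by ring)
  · exact hf.sub (hfg.const_mul 2)

end WeightedSquares

theorem sce_difference_eq_half_sq_integral_general
    {Zs Zp Ys : Type*} [MeasurableSpace Zs] [MeasurableSpace Zp] [MeasurableSpace Ys]
    (μ : Measure Zs) (ν : Measure Zp) (ρ : Measure Ys)
    [SigmaFinite μ] [SigmaFinite ν] [SigmaFinite ρ]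
    (pj : (Zs × Zp) × Ys → ℝ)    -- joint density p(x, y) = p(z, z⊥, y)
    (px : Zs × Zp → ℝ) (pz : Zs → ℝ) (pzy : Zs × Ys → ℝ)
    (hpjint : Integrable pj ((μ.prod ν).prod ρ))
    (hpx : ∀ x, px x = ∫ y, pj (x, y) ∂ρ)
    (hpz : ∀ z, pz z = ∫ w, px (z, w) ∂ν)
    (hpzy : ∀ z y, pzy (z, y) = ∫ w, pj ((z, w), y) ∂ν)
    (hpxpos : ∀ x, 0 < px x)
    (hpzpos : ∀ z, 0 < pz z)
    (hix : Integrable (fun a => (pj a / px a.1) ^ 2 * px a.1) ((μ.prod ν).prod ρ))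
    (hizx : Integrable (fun a => (pzy (a.1.1, a.2) / pz a.1.1) ^ 2 * px a.1)
      ((μ.prod ν).prod ρ)) :
    (-(1 / 2) * ∫ a, (pzy a / pz a.1) ^ 2 * pz a.1 ∂(μ.prod ρ))
        - (-(1 / 2) * ∫ a, (pj a / px a.1) ^ 2 * px a.1 ∂((μ.prod ν).prod ρ))
      = (1 / 2) * ∫ a, (pj a / px a.1 - pzy (a.1.1, a.2) / pz a.1.1) ^ 2 * px a.1
          ∂((μ.prod ν).prod ρ)
    ∧ (-(1 / 2) * ∫ a, (pzy a / pz a.1) ^ 2 * pz a.1 ∂(μ.prod ρ))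
        ≥ -(1 / 2) * ∫ a, (pj a / px a.1) ^ 2 * px a.1 ∂((μ.prod ν).prod ρ) := by
  have hpx_meas : AEStronglyMeasurable px (μ.prod ν) := by
    simpa only [← funext hpx] using hpjint.aestronglyMeasurable.integral_prod_right'
  have hpz_meas : AEStronglyMeasurable pz μ := by
    simpa only [← funext hpz] using hpx_meas.integral_prod_right'
  have hpzy_meas : AEStronglyMeasurable pzy (μ.prod ρ) := by
    simpa only [← hpzy] using hpjint.aestronglyMeasurable.integral_middle
  have hcross_int : Integrable
      (fun a => pj a / px a.1 * (pzy (a.1.1, a.2) / pz a.1.1) * px a.1) ((μ.prod ν).prod ρ) :=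
    integrable_mul_mul_of_integrable_sq_mul (.of_forall fun a => (hpxpos a.1).le)
      (((hpjint.aestronglyMeasurable.div₀ hpx_meas.comp_fst).mul
        (hpzy_meas.div₀ hpz_meas.comp_fst).lift_middle).mul hpx_meas.comp_fst) hix hizx
  have hcross : ∫ a, pj a / px a.1 * (pzy (a.1.1, a.2) / pz a.1.1) * px a.1 ∂((μ.prod ν).prod ρ)
      = ∫ b, (pzy b / pz b.1) ^ 2 * pz b.1 ∂(μ.prod ρ) := by
    have hpj : ∀ a, pj a / px a.1 * (pzy (a.1.1, a.2) / pz a.1.1) * px a.1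
        = pzy (a.1.1, a.2) / pz a.1.1 * pj a := fun a => by
      field_simp [(hpxpos a.1).ne']
    simp only [hpj] at hcross_int ⊢
    rw [integral_lift_mul_eq_integral_mul_integral_middle
      (g := fun b => pzy b / pz b.1) hcross_int]
    refine integral_congr_ae (.of_forall fun b => ?_)
    simp only [← hpzy]
    field_simp [(hpzpos b.1).ne']
  have hsq : ∫ a, (pzy (a.1.1, a.2) / pz a.1.1) ^ 2 * px a.1 ∂((μ.prod ν).prod ρ)
      = ∫ b, (pzy b / pz b.1) ^ 2 * pz b.1 ∂(μ.prod ρ) := by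
    rw [integral_lift_mul_eq_integral_mul_integral_middle
      (g := fun b => (pzy b / pz b.1) ^ 2) (F := fun a => px a.1) hizx]
    simp only [← hpz]
  have hexpand := integral_sub_sq_mul hix hizx hcross_int
  rw [hcross, hsq] at hexpand
  have hnonneg : 0 ≤ ∫ a, (pj a / px a.1 - pzy (a.1.1, a.2) / pz a.1.1) ^ 2 * px a.1
      ∂((μ.prod ν).prod ρ) :=
    integral_nonneg fun a => mul_nonneg (sq_nonneg _) (hpxpos a.1).le
  constructor <;> linarith

/-- with x = (z, z⊥), SCẼ(Y|Z) - SCẼ(Y|X) = (1/2)∬ (p(y|x) - p(y|z))² p(x) dx dy,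
    and in particular SCẼ(Y|Z) ≥ SCẼ(Y|X). -/
theorem sce_difference_eq_half_sq_integral
    {Zs Zp Ys : Type*} [MeasurableSpace Zs] [MeasurableSpace Zp] [MeasurableSpace Ys]
    (μ : Measure Zs) (ν : Measure Zp) (ρ : Measure Ys)
    [SigmaFinite μ] [SigmaFinite ν] [SigmaFinite ρ]
    (pj : (Zs × Zp) × Ys → ℝ)    -- joint density p(x, y) = p(z, z⊥, y)
    (px : Zs × Zp → ℝ) (pz : Zs → ℝ) (pzy : Zs × Ys → ℝ)
    (hpjnn : ∀ a, 0 ≤ pj a)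
    (hpjint : Integrable pj ((μ.prod ν).prod ρ))
    (hpx : ∀ x, px x = ∫ y, pj (x, y) ∂ρ)
    (hpz : ∀ z, pz z = ∫ w, px (z, w) ∂ν)
    (hpzy : ∀ z y, pzy (z, y) = ∫ w, pj ((z, w), y) ∂ν)
    (hpxpos : ∀ x, 0 < px x)
    (hpzpos : ∀ z, 0 < pz z)
    (hix : Integrable (fun a => (pj a / px a.1) ^ 2 * px a.1) ((μ.prod ν).prod ρ))
    (hiz : Integrable (fun a => (pzy a / pz a.1) ^ 2 * pz a.1) (μ.prod ρ))
    (hizx : Integrable (fun a => (pzy (a.1.1, a.2) / pz a.1.1) ^ 2 * px a.1)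
      ((μ.prod ν).prod ρ)) :
    (-(1 / 2) * ∫ a, (pzy a / pz a.1) ^ 2 * pz a.1 ∂(μ.prod ρ))
        - (-(1 / 2) * ∫ a, (pj a / px a.1) ^ 2 * px a.1 ∂((μ.prod ν).prod ρ))
      = (1 / 2) * ∫ a, (pj a / px a.1 - pzy (a.1.1, a.2) / pz a.1.1) ^ 2 * px a.1
          ∂((μ.prod ν).prod ρ)
    ∧ (-(1 / 2) * ∫ a, (pzy a / pz a.1) ^ 2 * pz a.1 ∂(μ.prod ρ))
        ≥ -(1 / 2) * ∫ a, (pj a / px a.1) ^ 2 * px a.1 ∂((μ.prod ν).prod ρ) :=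
  sce_difference_eq_half_sq_integral_general μ ν ρ pj px pz pzy hpjint hpx hpz hpzy hpxpos hpzpos
    hix hizx
end

section
/- With x = (z, z⊥), the identity SCẼ(Y|Z) - SCẼ(Y|X) = (1/2)∬ ( p(z⊥, y | z) / (p(z⊥|z) p(y|z)) - 1 )² p(y|z)² p(x) dx dy holds; consequently SCẼ(Y|Z) = SCẼ(Y|X) if and only if p(z⊥, y | z) = p(z⊥|z) p(y|z) almost everywhere (i.e., y and z⊥ are conditionally independent given z). -/
open MeasureTheory

lemma fubini_mid_aux {Zs Zp Ys : Type*} [MeasurableSpace Zs] [MeasurableSpace Zp]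
    [MeasurableSpace Ys]
    (μ : Measure Zs) (ν : Measure Zp) (ρ : Measure Ys)
    [SigmaFinite μ] [SigmaFinite ν] [SigmaFinite ρ]
    (f : (Zs × Zp) × Ys → ℝ) (hf : Integrable f ((μ.prod ν).prod ρ))
    (g : Zs × Ys → ℝ) (hfg : ∀ b : Zs × Ys, ∫ w, f ((b.1, w), b.2) ∂ν = g b) :
    ∫ a, f a ∂((μ.prod ν).prod ρ) = ∫ b, g b ∂(μ.prod ρ) := by
  let e : (Zs × Ys) × Zp ≃ᵐ (Zs × Zp) × Ys :=
    (MeasurableEquiv.prodAssoc.trans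
      ((MeasurableEquiv.refl Zs).prodCongr MeasurableEquiv.prodComm)).trans
      MeasurableEquiv.prodAssoc.symm
  have hmp : MeasurePreserving e ((μ.prod ρ).prod ν) ((μ.prod ν).prod ρ) := by
    have h1 := measurePreserving_prodAssoc μ ρ ν
    have h2 : MeasurePreserving (Prod.map (id : Zs → Zs) (Prod.swap : Ys × Zp → Zp × Ys))
        (μ.prod (ρ.prod ν)) (μ.prod (ν.prod ρ)) :=
      (MeasurePreserving.id μ).prod Measure.measurePreserving_swap
    have h3 := (measurePreserving_prodAssoc μ ν ρ).symm
    exact h3.comp (h2.comp h1)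
  have key := hmp.integral_comp' (f := e) f
  have hfe : Integrable (fun x => f (e x)) ((μ.prod ρ).prod ν) :=
    (hmp.integrable_comp_emb e.measurableEmbedding).2 hf
  rw [← key, MeasureTheory.integral_prod _ hfe]
  exact integral_congr_ae (Filter.Eventually.of_forall fun b => hfg b)

/-- with x = (z, z⊥),
    SCẼ(Y|Z) - SCẼ(Y|X) = (1/2)∬ ( p(z⊥,y|z)/(p(z⊥|z)p(y|z)) - 1 )² p(y|z)² p(x) dx dy,
    and SCẼ(Y|Z) = SCẼ(Y|X) iff p(z⊥,y|z) = p(z⊥|z) p(y|z) almost everywhere. -/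
theorem sce_difference_ratio_form_and_equality_iff_cond_indep
    {Zs Zp Ys : Type*} [MeasurableSpace Zs] [MeasurableSpace Zp] [MeasurableSpace Ys]
    (μ : Measure Zs) (ν : Measure Zp) (ρ : Measure Ys)
    [SigmaFinite μ] [SigmaFinite ν] [SigmaFinite ρ]
    (pj : (Zs × Zp) × Ys → ℝ)    -- joint density p(z, z⊥, y)
    (px : Zs × Zp → ℝ) (pz : Zs → ℝ) (pzy : Zs × Ys → ℝ)
    (hpjnn : ∀ a, 0 ≤ pj a)
    (hpjint : Integrable pj ((μ.prod ν).prod ρ))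
    (hpx : ∀ x, px x = ∫ y, pj (x, y) ∂ρ)
    (hpz : ∀ z, pz z = ∫ w, px (z, w) ∂ν)
    (hpzy : ∀ z y, pzy (z, y) = ∫ w, pj ((z, w), y) ∂ν)
    (hpxpos : ∀ x, 0 < px x)
    (hpzpos : ∀ z, 0 < pz z)
    (hpzypos : ∀ z y, 0 < pzy (z, y))
    (hix : Integrable (fun a => (pj a / px a.1) ^ 2 * px a.1) ((μ.prod ν).prod ρ))
    (hiz : Integrable (fun a => (pzy a / pz a.1) ^ 2 * pz a.1) (μ.prod ρ))
    (hizx : Integrable (fun a => (pzy (a.1.1, a.2) / pz a.1.1) ^ 2 * px a.1)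
      ((μ.prod ν).prod ρ)) :
    ((-(1 / 2) * ∫ a, (pzy a / pz a.1) ^ 2 * pz a.1 ∂(μ.prod ρ))
        - (-(1 / 2) * ∫ a, (pj a / px a.1) ^ 2 * px a.1 ∂((μ.prod ν).prod ρ))
      = (1 / 2) * ∫ a, ((pj a / pz a.1.1)
            / ((px a.1 / pz a.1.1) * (pzy (a.1.1, a.2) / pz a.1.1)) - 1) ^ 2
          * (pzy (a.1.1, a.2) / pz a.1.1) ^ 2 * px a.1 ∂((μ.prod ν).prod ρ))
    ∧ ((-(1 / 2) * ∫ a, (pzy a / pz a.1) ^ 2 * pz a.1 ∂(μ.prod ρ))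
          = -(1 / 2) * ∫ a, (pj a / px a.1) ^ 2 * px a.1 ∂((μ.prod ν).prod ρ)
        ↔ ∀ᵐ a ∂((μ.prod ν).prod ρ),
            pj a / pz a.1.1 = (px a.1 / pz a.1.1) * (pzy (a.1.1, a.2) / pz a.1.1)) := by
  -- notation
  set F : (Zs × Zp) × Ys → ℝ := fun a =>
    ((pj a / pz a.1.1) / ((px a.1 / pz a.1.1) * (pzy (a.1.1, a.2) / pz a.1.1)) - 1) ^ 2
      * (pzy (a.1.1, a.2) / pz a.1.1) ^ 2 * px a.1 with hF
  -- cross term: pj a * (pzy/pz)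
  set C : (Zs × Zp) × Ys → ℝ := fun a => pj a * (pzy (a.1.1, a.2) / pz a.1.1) with hC
  have hBnn : ∀ a : (Zs × Zp) × Ys, 0 ≤ pzy (a.1.1, a.2) / pz a.1.1 := fun a =>
    le_of_lt (div_pos (hpzypos a.1.1 a.2) (hpzpos a.1.1))
  -- pointwise decomposition of F
  have hpt : ∀ a, F a
      = (pj a / px a.1) ^ 2 * px a.1 - 2 * C a
        + (pzy (a.1.1, a.2) / pz a.1.1) ^ 2 * px a.1 := by
    intro a
    have h1 : px a.1 ≠ 0 := (hpxpos a.1).ne'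
    have h2 : pz a.1.1 ≠ 0 := (hpzpos a.1.1).ne'
    have h3 : pzy (a.1.1, a.2) ≠ 0 := (hpzypos a.1.1 a.2).ne'
    simp only [hF, hC]
    field_simp
    ring
  -- sqrt representation of cross term
  have hCsqrt : ∀ a, C a
      = Real.sqrt ((pj a / px a.1) ^ 2 * px a.1)
        * Real.sqrt ((pzy (a.1.1, a.2) / pz a.1.1) ^ 2 * px a.1) := by
    intro a
    have h1 : (0:ℝ) < px a.1 := hpxpos a.1
    have hAnn : 0 ≤ pj a / px a.1 := div_nonneg (hpjnn a) h1.le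
    rw [Real.sqrt_mul (sq_nonneg _), Real.sqrt_mul (sq_nonneg _),
      Real.sqrt_sq hAnn, Real.sqrt_sq (hBnn a)]
    have hss : Real.sqrt (px a.1) * Real.sqrt (px a.1) = px a.1 :=
      Real.mul_self_sqrt h1.le
    simp only [hC]
    rw [show pj a / px a.1 * Real.sqrt (px a.1)
          * (pzy (a.1.1, a.2) / pz a.1.1 * Real.sqrt (px a.1))
        = pj a / px a.1 * (pzy (a.1.1, a.2) / pz a.1.1)
          * (Real.sqrt (px a.1) * Real.sqrt (px a.1)) from by ring, hss]
    field_simp [h1.ne', (hpzpos a.1.1).ne']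
  -- cross term integrable
  have hCmeas : AEStronglyMeasurable C ((μ.prod ν).prod ρ) := by
    have := (Real.continuous_sqrt.comp_aestronglyMeasurable hix.1).mul
      (Real.continuous_sqrt.comp_aestronglyMeasurable hizx.1)
    exact this.congr (Filter.Eventually.of_forall fun a => (hCsqrt a).symm)
  have hCint : Integrable C ((μ.prod ν).prod ρ) := by
    refine Integrable.mono' ((hix.add hizx).div_const 2) hCmeas
      (Filter.Eventually.of_forall fun a => ?_)
    have hf1 : 0 ≤ (pj a / px a.1) ^ 2 * px a.1 :=
      mul_nonneg (sq_nonneg _) (hpxpos a.1).le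
    have hf2 : 0 ≤ (pzy (a.1.1, a.2) / pz a.1.1) ^ 2 * px a.1 :=
      mul_nonneg (sq_nonneg _) (hpxpos a.1).le
    have hCnn : 0 ≤ C a := mul_nonneg (hpjnn a) (hBnn a)
    rw [Real.norm_eq_abs, abs_of_nonneg hCnn, hCsqrt a]
    have s1 := Real.sq_sqrt hf1
    have s2 := Real.sq_sqrt hf2
    simp only [Pi.add_apply]
    nlinarith [s1, s2, sq_nonneg (Real.sqrt ((pj a / px a.1) ^ 2 * px a.1)
      - Real.sqrt ((pzy (a.1.1, a.2) / pz a.1.1) ^ 2 * px a.1))]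
  -- per-section integrability (the Bochner integral is positive, hence defined)
  have hsecj : ∀ z y, Integrable (fun w => pj ((z, w), y)) ν := by
    intro z y
    by_contra h
    have := hpzy z y
    rw [integral_undef h] at this
    exact (hpzypos z y).ne' this
  have hsecx : ∀ z, Integrable (fun w => px (z, w)) ν := by
    intro z
    by_contra h
    have := hpz z
    rw [integral_undef h] at this
    exact (hpzpos z).ne' this
  -- Fubini for the cross term
  have hCval : ∫ a, C a ∂((μ.prod ν).prod ρ)
      = ∫ b, (pzy b / pz b.1) ^ 2 * pz b.1 ∂(μ.prod ρ) := by
    refine fubini_mid_aux μ ν ρ C hCint _ ?_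
    rintro ⟨z, y⟩
    simp only [hC]
    rw [integral_mul_const, ← hpzy z y]
    have h2 : pz z ≠ 0 := (hpzpos z).ne'
    field_simp
  -- Fubini for the B² px term
  have hBval : ∫ a, (pzy (a.1.1, a.2) / pz a.1.1) ^ 2 * px a.1 ∂((μ.prod ν).prod ρ)
      = ∫ b, (pzy b / pz b.1) ^ 2 * pz b.1 ∂(μ.prod ρ) := by
    refine fubini_mid_aux μ ν ρ _ hizx _ ?_
    rintro ⟨z, y⟩
    simp only
    rw [integral_const_mul, ← hpz z]
  -- F is integrable
  have hFint : Integrable F ((μ.prod ν).prod ρ) :=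
    (((hix.sub (hCint.const_mul 2)).add hizx).congr
      (Filter.Eventually.of_forall fun a => (hpt a).symm))
  -- value of ∫ F
  have hFval : ∫ a, F a ∂((μ.prod ν).prod ρ)
      = (∫ a, (pj a / px a.1) ^ 2 * px a.1 ∂((μ.prod ν).prod ρ))
        - ∫ b, (pzy b / pz b.1) ^ 2 * pz b.1 ∂(μ.prod ρ) := by
    have e1 : ∫ a, F a ∂((μ.prod ν).prod ρ)
        = ∫ a, ((pj a / px a.1) ^ 2 * px a.1 - 2 * C a
            + (pzy (a.1.1, a.2) / pz a.1.1) ^ 2 * px a.1) ∂((μ.prod ν).prod ρ) :=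
      integral_congr_ae (Filter.Eventually.of_forall hpt)
    have hmul2 : Integrable (fun a => 2 * C a) ((μ.prod ν).prod ρ) := hCint.const_mul 2
    have hsub : Integrable (fun a => (pj a / px a.1) ^ 2 * px a.1 - 2 * C a)
        ((μ.prod ν).prod ρ) := hix.sub hmul2
    rw [e1, integral_add hsub hizx, integral_sub hix hmul2, integral_const_mul, hCval, hBval]
    ring
  have part1 : (-(1 / 2) * ∫ a, (pzy a / pz a.1) ^ 2 * pz a.1 ∂(μ.prod ρ))
        - (-(1 / 2) * ∫ a, (pj a / px a.1) ^ 2 * px a.1 ∂((μ.prod ν).prod ρ))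
      = (1 / 2) * ∫ a, F a ∂((μ.prod ν).prod ρ) := by
    rw [hFval]; ring
  refine ⟨part1, ?_⟩
  -- part 2
  have hFnn : ∀ a, 0 ≤ F a := fun a =>
    mul_nonneg (mul_nonneg (sq_nonneg _) (sq_nonneg _)) (hpxpos a.1).le
  have hzero : (∫ a, F a ∂((μ.prod ν).prod ρ)) = 0 ↔ F =ᵐ[(μ.prod ν).prod ρ] 0 :=
    integral_eq_zero_iff_of_nonneg hFnn hFint
  have hiffpt : ∀ a, F a = 0 ↔
      pj a / pz a.1.1 = (px a.1 / pz a.1.1) * (pzy (a.1.1, a.2) / pz a.1.1) := by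
    intro a
    have h1 : (0:ℝ) < px a.1 := hpxpos a.1
    have h2 : (0:ℝ) < pz a.1.1 := hpzpos a.1.1
    have h3 : (0:ℝ) < pzy (a.1.1, a.2) := hpzypos a.1.1 a.2
    have hD : (0:ℝ) < (px a.1 / pz a.1.1) * (pzy (a.1.1, a.2) / pz a.1.1) :=
      mul_pos (div_pos h1 h2) (div_pos h3 h2)
    constructor
    · intro h
      have hs : ((pj a / pz a.1.1)
          / ((px a.1 / pz a.1.1) * (pzy (a.1.1, a.2) / pz a.1.1)) - 1) = 0 := by
        by_contra hne
        have : F a ≠ 0 := by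
          simp only [hF]
          positivity
        exact this h
      have := sub_eq_zero.mp hs
      exact (div_eq_one_iff_eq hD.ne').mp this
    · intro h
      simp only [hF, h, div_self hD.ne']
      ring
  constructor
  · intro h
    have hJ : (∫ a, F a ∂((μ.prod ν).prod ρ)) = 0 := by
      have := part1
      rw [h] at this
      linarith
    exact (hzero.mp hJ).mono fun a ha => (hiffpt a).mp ha
  · intro h
    have hJ : (∫ a, F a ∂((μ.prod ν).prod ρ)) = 0 :=
      hzero.mpr (h.mono fun a ha => (hiffpt a).mpr ha)
    have := part1
    rw [hJ] at this
    linarith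
end

section
/- Let α̂(W) = (Ĝ(W) + λI)⁻¹ ĥ(W) where Ĝ and ĥ depend differentiably on a scalar parameter t (an entry of W), with Ĝ symmetric and Ĝ + λI invertible. Then d/dt [ (1/2) α̂ᵀĜα̂ − ĥᵀα̂ ] = α̂ᵀ (dĜ/dt) ( (3/2)α̂ − β̂ ) + (dĥ/dt)ᵀ ( β̂ − 2α̂ ), where β̂ = (Ĝ + λI)⁻¹ Ĝ α̂. -/
/-!
Differentiating `(G + λI) α = h` gives `α' = (G + λI)⁻¹ (h' - G' α)`. For symmetric `G` the
derivative of `½ αᵀGα - hᵀα` is `α'ᵀ(Gα - h) + ½ αᵀG'α - h'ᵀα`, and moving the symmetric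
`(G + λI)⁻¹` across the first product turns `α'ᵀ(Gα - h)` into `(h' - G'α)ᵀ(β - α)`, because
`(G + λI)⁻¹ h = α`. The rest is bookkeeping with the symmetry of `G'`.
-/

open Matrix

theorem Matrix.IsSymm.dotProduct_mulVec_comm {R n : Type*} [CommSemiring R] [Fintype n]
    {M : Matrix n n R} (hM : M.IsSymm) (x y : n → R) : x ⬝ᵥ (M *ᵥ y) = y ⬝ᵥ (M *ᵥ x) := by
  rw [dotProduct_comm, dotProduct_mulVec, ← mulVec_transpose, hM]

section Calculus

variable {𝕜 : Type*} [NontriviallyNormedField 𝕜] {m n : Type*} {t : 𝕜}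

theorem HasDerivAt.dotProduct [Fintype n] {u v : 𝕜 → n → 𝕜} {u' v' : n → 𝕜}
    (hu : HasDerivAt u u' t) (hv : HasDerivAt v v' t) :
    HasDerivAt (fun t => u t ⬝ᵥ v t) (u' ⬝ᵥ v t + u t ⬝ᵥ v') t := by
  simpa only [_root_.dotProduct, ← Finset.sum_add_distrib] using
    HasDerivAt.fun_sum (u := Finset.univ) fun i _ =>
      (hasDerivAt_pi.1 hu i).fun_mul (hasDerivAt_pi.1 hv i)

theorem hasDerivAt_mulVec [Fintype n] {M : 𝕜 → Matrix m n 𝕜} {M' : Matrix m n 𝕜} {v : 𝕜 → n → 𝕜}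
    {v' : n → 𝕜} (hM : ∀ i j, HasDerivAt (fun t => M t i j) (M' i j) t)
    (hv : HasDerivAt v v' t) :
    HasDerivAt (fun t => M t *ᵥ v t) (M' *ᵥ v t + M t *ᵥ v') t :=
  hasDerivAt_pi.2 fun i => (hasDerivAt_pi.2 (hM i)).dotProduct hv

theorem isSymm_of_hasDerivAt_apply {G : 𝕜 → Matrix n n 𝕜} {G' : Matrix n n 𝕜}
    (hsymm : ∀ t, (G t).IsSymm) (hG : ∀ i j, HasDerivAt (fun t => G t i j) (G' i j) t) :
    G'.IsSymm := by
  refine IsSymm.ext fun i j => ?_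
  have hGji : (fun t => G t j i) = fun t => G t i j := funext fun t => (hsymm t).apply i j
  exact (hGji ▸ hG j i).unique (hG i j)

theorem hasDerivAt_half_dotProduct_mulVec_sub [CharZero 𝕜] [Fintype n] {G : 𝕜 → Matrix n n 𝕜}
    {G' : Matrix n n 𝕜} {h x : 𝕜 → n → 𝕜} {h' x' : n → 𝕜} (hsymm : (G t).IsSymm)
    (hG : ∀ i j, HasDerivAt (fun t => G t i j) (G' i j) t) (hh : HasDerivAt h h' t)
    (hx : HasDerivAt x x' t) :
    HasDerivAt (fun t => (1 / 2) * (x t ⬝ᵥ (G t *ᵥ x t)) - h t ⬝ᵥ x t)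
      (x' ⬝ᵥ (G t *ᵥ x t - h t) + (1 / 2) * (x t ⬝ᵥ (G' *ᵥ x t)) - h' ⬝ᵥ x t) t := by
  refine (((hx.dotProduct (hasDerivAt_mulVec hG hx)).const_mul (1 / 2)).sub
    (hh.dotProduct hx)).congr_deriv ?_
  rw [dotProduct_add, hsymm.dotProduct_mulVec_comm (x t) x', dotProduct_sub,
    dotProduct_comm x' (h t)]
  ring

end Calculus

section MatrixInverse

variable {𝕜 : Type*} [RCLike 𝕜] {n : Type*} [Fintype n] [DecidableEq n]

-- Any matrix norm would do: only entrywise statements leave this section.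
attribute [local instance] Matrix.linftyOpNormedRing Matrix.linftyOpNormedAlgebra

theorem hasDerivAt_matrix_iff {A : 𝕜 → Matrix n n 𝕜} {A' : Matrix n n 𝕜} {t : 𝕜} :
    HasDerivAt A A' t ↔ ∀ i j, HasDerivAt (fun t => A t i j) (A' i j) t := by
  let e : Matrix n n 𝕜 ≃L[𝕜] (n → n → 𝕜) :=
    LinearEquiv.toContinuousLinearEquiv (Matrix.ofLinearEquiv 𝕜).symm
  constructor
  · intro hA i j
    exact hasDerivAt_pi.1 (hasDerivAt_pi.1 (e.hasFDerivAt.comp_hasDerivAt t hA) i) j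
  · intro hA
    exact e.symm.hasFDerivAt.comp_hasDerivAt t (hasDerivAt_pi.2 fun i => hasDerivAt_pi.2 (hA i))

theorem hasDerivAt_matrix_inv_apply {A : 𝕜 → Matrix n n 𝕜} {A' : Matrix n n 𝕜} {t : 𝕜}
    (hA : ∀ i j, HasDerivAt (fun t => A t i j) (A' i j) t) (hunit : IsUnit (A t)) (i j : n) :
    HasDerivAt (fun t => (A t)⁻¹ i j) (-((A t)⁻¹ * A' * (A t)⁻¹) i j) t := by
  obtain ⟨u, hu⟩ := hunit
  have hinv : HasFDerivAt Ring.inverse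
      (-ContinuousLinearMap.mulLeftRight 𝕜 _ (A t)⁻¹ (A t)⁻¹) (A t) := by
    rw [← hu, ← coe_units_inv]
    exact hasFDerivAt_ringInverse u
  have hcomp := hinv.comp_hasDerivAt t (hasDerivAt_matrix_iff.2 hA)
  simp only [Function.comp_def, ← nonsing_inv_eq_ringInverse] at hcomp
  exact hasDerivAt_matrix_iff.1 hcomp i j

theorem hasDerivAt_inv_mulVec {A : 𝕜 → Matrix n n 𝕜} {A' : Matrix n n 𝕜} {b : 𝕜 → n → 𝕜}
    {b' : n → 𝕜} {t : 𝕜} (hA : ∀ i j, HasDerivAt (fun t => A t i j) (A' i j) t)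
    (hunit : IsUnit (A t)) (hb : HasDerivAt b b' t) :
    HasDerivAt (fun t => (A t)⁻¹ *ᵥ b t) ((A t)⁻¹ *ᵥ (b' - A' *ᵥ ((A t)⁻¹ *ᵥ b t))) t := by
  refine (hasDerivAt_mulVec (M' := -((A t)⁻¹ * A' * (A t)⁻¹))
    (hasDerivAt_matrix_inv_apply hA hunit) hb).congr_deriv ?_
  rw [mulVec_sub, neg_mulVec, mulVec_mulVec, mulVec_mulVec]
  abel

end MatrixInverse

theorem sce_derivative_identity {R n : Type*} [Field R] [CharZero R] [Fintype n]
    {G G' B : Matrix n n R} (hG' : G'.IsSymm) (hB : B.IsSymm) (h h' : n → R) :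
    (B *ᵥ (h' - G' *ᵥ (B *ᵥ h))) ⬝ᵥ (G *ᵥ (B *ᵥ h) - h)
        + (1 / 2) * ((B *ᵥ h) ⬝ᵥ (G' *ᵥ (B *ᵥ h))) - h' ⬝ᵥ (B *ᵥ h) =
      (B *ᵥ h) ⬝ᵥ (G' *ᵥ ((3 / 2 : R) • (B *ᵥ h) - B *ᵥ (G *ᵥ (B *ᵥ h))))
        + h' ⬝ᵥ (B *ᵥ (G *ᵥ (B *ᵥ h)) - (2 : R) • (B *ᵥ h)) := by
  set α := B *ᵥ h
  set β := B *ᵥ (G *ᵥ α)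
  have hB_residual : (B *ᵥ (h' - G' *ᵥ α)) ⬝ᵥ (G *ᵥ α - h) = (h' - G' *ᵥ α) ⬝ᵥ (β - α) := by
    rw [dotProduct_comm, hB.dotProduct_mulVec_comm, mulVec_sub]
  rw [hB_residual, sub_dotProduct, dotProduct_comm (G' *ᵥ α), hG'.dotProduct_mulVec_comm (β - α) α]
  simp only [dotProduct_sub, mulVec_sub, mulVec_smul, dotProduct_smul, smul_eq_mul]
  ring

theorem sce_estimator_derivative_general
    {m : ℕ} (G : ℝ → Matrix (Fin m) (Fin m) ℝ) (h : ℝ → (Fin m → ℝ))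
    (G' : Matrix (Fin m) (Fin m) ℝ) (h' : Fin m → ℝ) (l t₀ : ℝ)
    (hGsymm : ∀ t, (G t)ᵀ = G t)
    (hGinv : ∀ t, IsUnit (G t + l • (1 : Matrix (Fin m) (Fin m) ℝ)))
    (hG : ∀ i j, HasDerivAt (fun t => G t i j) (G' i j) t₀)
    (hh : ∀ j, HasDerivAt (fun t => h t j) (h' j) t₀) :
    HasDerivAt
      (fun t =>
        (1 / 2) * (((G t + l • (1 : Matrix (Fin m) (Fin m) ℝ))⁻¹ *ᵥ h t) ⬝ᵥ
            (G t *ᵥ ((G t + l • (1 : Matrix (Fin m) (Fin m) ℝ))⁻¹ *ᵥ h t)))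
          - h t ⬝ᵥ ((G t + l • (1 : Matrix (Fin m) (Fin m) ℝ))⁻¹ *ᵥ h t))
      ((((G t₀ + l • (1 : Matrix (Fin m) (Fin m) ℝ))⁻¹ *ᵥ h t₀) ⬝ᵥ
          (G' *ᵥ ((3 / 2 : ℝ) • ((G t₀ + l • (1 : Matrix (Fin m) (Fin m) ℝ))⁻¹ *ᵥ h t₀)
            - (G t₀ + l • (1 : Matrix (Fin m) (Fin m) ℝ))⁻¹ *ᵥ
                (G t₀ *ᵥ ((G t₀ + l • (1 : Matrix (Fin m) (Fin m) ℝ))⁻¹ *ᵥ h t₀)))))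
        + h' ⬝ᵥ ((G t₀ + l • (1 : Matrix (Fin m) (Fin m) ℝ))⁻¹ *ᵥ
              (G t₀ *ᵥ ((G t₀ + l • (1 : Matrix (Fin m) (Fin m) ℝ))⁻¹ *ᵥ h t₀))
            - (2 : ℝ) • ((G t₀ + l • (1 : Matrix (Fin m) (Fin m) ℝ))⁻¹ *ᵥ h t₀)))
      t₀ := by
  have hA : ∀ i j, HasDerivAt (fun t => (G t + l • (1 : Matrix (Fin m) (Fin m) ℝ)) i j)
      (G' i j) t₀ := fun i j => by
    simpa only [Matrix.add_apply] using (hG i j).add_const _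
  have hh' : HasDerivAt h h' t₀ := hasDerivAt_pi.2 hh
  have hα := hasDerivAt_inv_mulVec hA (hGinv t₀) hh'
  have hB : (G t₀ + l • (1 : Matrix (Fin m) (Fin m) ℝ))⁻¹.IsSymm :=
    (IsSymm.add (hGsymm t₀) (isSymm_one.smul l)).inv
  rw [← sce_derivative_identity (isSymm_of_hasDerivAt_apply hGsymm hG) hB]
  exact hasDerivAt_half_dotProduct_mulVec_sub (hGsymm t₀) hG hh' hα

/-- for α̂(t) = (Ĝ(t)+λI)⁻¹ĥ(t), β̂ = (Ĝ+λI)⁻¹Ĝα̂, the objective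
    (1/2)α̂ᵀĜα̂ − ĥᵀα̂ has derivative α̂ᵀ Ĝ' ((3/2)α̂ − β̂) + ĥ'ᵀ(β̂ − 2α̂). -/
theorem sce_estimator_derivative
    {m : ℕ} (G : ℝ → Matrix (Fin m) (Fin m) ℝ) (h : ℝ → (Fin m → ℝ))
    (G' : Matrix (Fin m) (Fin m) ℝ) (h' : Fin m → ℝ) (l t₀ : ℝ) (hl : 0 < l)
    (hGsymm : ∀ t, (G t)ᵀ = G t)
    (hGinv : ∀ t, IsUnit (G t + l • (1 : Matrix (Fin m) (Fin m) ℝ)))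
    (hG : ∀ i j, HasDerivAt (fun t => G t i j) (G' i j) t₀)
    (hh : ∀ j, HasDerivAt (fun t => h t j) (h' j) t₀) :
    HasDerivAt
      (fun t =>
        (1 / 2) * (((G t + l • (1 : Matrix (Fin m) (Fin m) ℝ))⁻¹ *ᵥ h t) ⬝ᵥ
            (G t *ᵥ ((G t + l • (1 : Matrix (Fin m) (Fin m) ℝ))⁻¹ *ᵥ h t)))
          - h t ⬝ᵥ ((G t + l • (1 : Matrix (Fin m) (Fin m) ℝ))⁻¹ *ᵥ h t))
      ((((G t₀ + l • (1 : Matrix (Fin m) (Fin m) ℝ))⁻¹ *ᵥ h t₀) ⬝ᵥ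
          (G' *ᵥ ((3 / 2 : ℝ) • ((G t₀ + l • (1 : Matrix (Fin m) (Fin m) ℝ))⁻¹ *ᵥ h t₀)
            - (G t₀ + l • (1 : Matrix (Fin m) (Fin m) ℝ))⁻¹ *ᵥ
                (G t₀ *ᵥ ((G t₀ + l • (1 : Matrix (Fin m) (Fin m) ℝ))⁻¹ *ᵥ h t₀)))))
        + h' ⬝ᵥ ((G t₀ + l • (1 : Matrix (Fin m) (Fin m) ℝ))⁻¹ *ᵥ
              (G t₀ *ᵥ ((G t₀ + l • (1 : Matrix (Fin m) (Fin m) ℝ))⁻¹ *ᵥ h t₀))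
            - (2 : ℝ) • ((G t₀ + l • (1 : Matrix (Fin m) (Fin m) ℝ))⁻¹ *ᵥ h t₀)))
      t₀ :=
  sce_estimator_derivative_general G h G' h' l t₀ hGsymm hGinv hG hh
end
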